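/- arXiv:1712.00942 — 2 statements merged into one kernel-verified Lean document; each statement's English description precedes it below -/
import Mathlib

section
/- For any 1 ≤ p < ∞, any τ > 0, any radius r > 0, any positive integer n, and any shift t ∈ ℝ^n, the number of integer points in the shifted ℓ_p ball satisfies N_p(ℤ^n, r, t) ≤ exp(τ·r^p)·Θ_p(τ; t). -/
open Real BigOperators

/-- The ℓ_p "norm" (for a real exponent `p`) of a vector in `ℝ^n`:
`‖x‖_p = (∑ i, |x i|^p)^(1/p)`. -/
noncomputable def lpNorm (p : ℝ) {n : ℕ} (x : Fin n → ℝ) : ℝ :=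
  (∑ i, |x i| ^ p) ^ (1 / p)

/-- `N_p(ℤ^n, r, t)`: the number of integer points `z ∈ ℤ^n` with `‖z - t‖_p ≤ r`. -/
noncomputable def Npt (p : ℝ) (n : ℕ) (r : ℝ) (t : Fin n → ℝ) : ℕ :=
  Nat.card {z : Fin n → ℤ | lpNorm p (fun i => (z i : ℝ) - t i) ≤ r}

/-- `Θ_p(τ; s) = ∑_{z ∈ ℤ} exp(-τ |z - s|^p)`. -/
noncomputable def Theta1 (p τ s : ℝ) : ℝ :=
  ∑' z : ℤ, Real.exp (-τ * |(z : ℝ) - s| ^ p)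

/-- `Θ_p(τ; t) = ∏_i Θ_p(τ; t_i)` for a vector `t ∈ ℝ^n`. -/
noncomputable def ThetaVec (p : ℝ) {n : ℕ} (τ : ℝ) (t : Fin n → ℝ) : ℝ :=
  ∏ i, Theta1 p τ (t i)

/-! On the ball `‖z - t‖_p ≤ r` the weight `exp(τ r^p) ∏ᵢ exp(-τ |zᵢ - tᵢ|^p)` is at least `1`, so
counting the lattice points of the ball is bounded by summing this weight over all of `ℤ^n`, and that
sum factors coordinatewise into `exp(τ r^p) Θ_p(τ; t)`. -/

open Finset

theorem Set.natCard_le_of_forall_finset_card_le {α : Type*} {S : Set α} {B : ℝ} (hB : 0 ≤ B)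
    (h : ∀ F : Finset α, ↑F ⊆ S → (#F : ℝ) ≤ B) : (Nat.card S : ℝ) ≤ B := by
  by_cases hS : S.Finite
  · rw [Nat.card_coe_set_eq, Set.ncard_eq_toFinset_card _ hS]
    exact h _ hS.coe_toFinset.subset
  · have : Infinite S := Set.infinite_coe_iff.2 hS
    simpa [Nat.card_eq_zero_of_infinite] using hB

theorem Finset.sum_prod_le_prod_tsum {ι κ : Type*} [Fintype ι] {g : ι → κ → ℝ}
    (hg : ∀ i a, 0 ≤ g i a) (hs : ∀ i, Summable (g i)) (F : Finset (ι → κ)) :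
    ∑ z ∈ F, ∏ i, g i (z i) ≤ ∏ i, ∑' a, g i a := by
  classical
  calc ∑ z ∈ F, ∏ i, g i (z i)
      ≤ ∑ z ∈ Fintype.piFinset fun i => F.image (· i), ∏ i, g i (z i) :=
        sum_le_sum_of_subset_of_nonneg
          (fun z hz => Fintype.mem_piFinset.2 fun i => mem_image_of_mem _ hz)
          fun z _ _ => prod_nonneg fun i _ => hg i _
    _ = ∏ i, ∑ a ∈ F.image (· i), g i a := (prod_univ_sum _ _).symm
    _ ≤ ∏ i, ∑' a, g i a :=
        prod_le_prod (fun i _ => sum_nonneg fun a _ => hg i a)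
          fun i _ => (hs i).sum_le_tsum _ fun a _ => hg i a

theorem Real.sub_one_le_rpow {x p : ℝ} (hx : 0 ≤ x) (hp : 1 ≤ p) : x - 1 ≤ x ^ p := by
  rcases le_or_gt 1 x with h1 | h1
  · calc x - 1 ≤ x ^ (1 : ℝ) := by simp
      _ ≤ x ^ p := rpow_le_rpow_of_exponent_le h1 hp
  · linarith [rpow_nonneg hx p]

theorem summable_exp_neg_mul_abs_int {τ : ℝ} (hτ : 0 < τ) :
    Summable fun z : ℤ => exp (-τ * |(z : ℝ)|) := by
  have hnat : Summable fun k : ℕ => exp (k * -τ) := summable_exp_nat_mul_iff.2 (by linarith)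
  apply Summable.of_nat_of_neg <;> simpa [mul_comm] using hnat

theorem summable_exp_neg_mul_abs_sub_int_rpow {p τ : ℝ} (hp : 1 ≤ p) (hτ : 0 < τ) (s : ℝ) :
    Summable fun z : ℤ => exp (-τ * |(z : ℝ) - s| ^ p) := by
  refine ((summable_exp_neg_mul_abs_int hτ).mul_left (exp (τ * (|s| + 1)))).of_nonneg_of_le
    (fun _ => (exp_pos _).le) fun z => ?_
  rw [← exp_add, exp_le_exp]
  have hpow := sub_one_le_rpow (abs_nonneg ((z : ℝ) - s)) hp
  have htri := abs_sub_abs_le_abs_sub (z : ℝ) s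
  nlinarith

theorem ThetaVec_nonneg (p τ : ℝ) {n : ℕ} (t : Fin n → ℝ) : 0 ≤ ThetaVec p τ t :=
  prod_nonneg fun _ _ => tsum_nonneg fun _ => (exp_pos _).le

theorem sum_abs_rpow_le_of_lpNorm_le {p r : ℝ} (hp : 0 < p) {n : ℕ} {x : Fin n → ℝ}
    (h : lpNorm p x ≤ r) : ∑ i, |x i| ^ p ≤ r ^ p := by
  have hsum : 0 ≤ ∑ i, |x i| ^ p := sum_nonneg fun i _ => rpow_nonneg (abs_nonneg _) p
  rw [lpNorm, one_div] at h
  exact (rpow_inv_le_iff_of_pos hsum ((rpow_nonneg hsum _).trans h) hp).1 h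

theorem one_le_exp_mul_prod_exp_of_lpNorm_le {p τ r : ℝ} (hp : 0 < p) (hτ : 0 ≤ τ) {n : ℕ}
    {x : Fin n → ℝ} (h : lpNorm p x ≤ r) :
    1 ≤ exp (τ * r ^ p) * ∏ i, exp (-τ * |x i| ^ p) := by
  rw [← exp_sum, ← exp_add, one_le_exp_iff, ← mul_sum]
  linarith [mul_le_mul_of_nonneg_left (sum_abs_rpow_le_of_lpNorm_le hp h) hτ]

theorem number_of_integer_points_le_exp_mul_theta_general
    (p τ r : ℝ) (hp : 1 ≤ p) (hτ : 0 < τ)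
    (n : ℕ) (t : Fin n → ℝ) :
    (Npt p n r t : ℝ) ≤ Real.exp (τ * r ^ p) * ThetaVec p τ t := by
  refine Set.natCard_le_of_forall_finset_card_le
    (mul_nonneg (exp_pos _).le (ThetaVec_nonneg p τ t)) fun F hF => ?_
  calc (#F : ℝ) = ∑ _z ∈ F, (1 : ℝ) := by simp
    _ ≤ ∑ z ∈ F, exp (τ * r ^ p) * ∏ i, exp (-τ * |(z i : ℝ) - t i| ^ p) :=
        sum_le_sum fun z hz =>
          one_le_exp_mul_prod_exp_of_lpNorm_le (by linarith) hτ.le (hF hz)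
    _ = exp (τ * r ^ p) * ∑ z ∈ F, ∏ i, exp (-τ * |(z i : ℝ) - t i| ^ p) :=
        (mul_sum _ _ _).symm
    _ ≤ exp (τ * r ^ p) * ThetaVec p τ t := by
        gcongr
        exact sum_prod_le_prod_tsum (g := fun i (a : ℤ) => exp (-τ * |(a : ℝ) - t i| ^ p))
          (fun _ _ => (exp_pos _).le)
          (fun i => summable_exp_neg_mul_abs_sub_int_rpow hp hτ (t i)) F

/-- For any `1 ≤ p < ∞`, `τ > 0`, `r > 0`, positive integer `n` and shift `t ∈ ℝ^n`,
`N_p(ℤ^n, r, t) ≤ exp(τ r^p) · Θ_p(τ; t)`. -/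
theorem number_of_integer_points_le_exp_mul_theta
    (p τ r : ℝ) (hp : 1 ≤ p) (hτ : 0 < τ) (hr : 0 < r)
    (n : ℕ) (hn : 0 < n) (t : Fin n → ℝ) :
    (Npt p n r t : ℝ) ≤ Real.exp (τ * r ^ p) * ThetaVec p τ t :=
  number_of_integer_points_le_exp_mul_theta_general p τ r hp hτ n t
end

section
/- For any p > 2 and τ > 0, the function t ↦ Θ_p(τ; t) is twice differentiable at t = 0 with first derivative 0 and second derivative ∂²/∂t² Θ_p(τ; t)|_{t=0} = p·τ·∑_{z∈ℤ} exp(−τ|z|^p)·|z|^{p−2}·(p·τ·|z|^p − (p−1)); in particular, if τ ≥ 1 − 1/p, this second derivative is strictly positive. -/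
/-! Θ_p(τ; ·) is the sum of the integer translates of the generalized Gaussian
φ(x) = exp(-τ|x|^p), which is twice differentiable for p > 2. Since |x|^p ≥ |x| - 1, for |s| < 1
every |z - s|^c φ(z - s) is at most e^(2τ) (|z| + 1)^c e^(-τ|z|), which is summable over z ∈ ℤ;
this dominates the derivatives of the translates, so the series can be differentiated term by term
twice near 0. At 0 the first derivative vanishes because φ' is odd. If pτ ≥ p - 1, every term of
the second-derivative series is nonnegative, as |z|^p ≥ 1 for z ≠ 0, and the term z = 2 is
positive. -/

open Real BigOperators

/-- The claimed value of the second derivative of `t ↦ Θ_p(τ; t)` at `t = 0`: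
`p τ ∑_{z ∈ ℤ} exp(−τ|z|^p) |z|^{p−2} (p τ |z|^p − (p−1))`.
(Note that for `z = 0` and `p > 2` the summand is `0` since `|0|^{p-2} = 0`.) -/
noncomputable def thetaSecondDerivAtZero (p τ : ℝ) : ℝ :=
  p * τ * ∑' z : ℤ,
    Real.exp (-τ * |(z : ℝ)| ^ p) * |(z : ℝ)| ^ (p - 2) * (p * τ * |(z : ℝ)| ^ p - (p - 1))

open Filter Topology Asymptotics

theorem hasDerivAt_abs_rpow_mul_self {q : ℝ} (hq : 0 < q) (x : ℝ) :
    HasDerivAt (fun y : ℝ => |y| ^ q * y) ((q + 1) * |x| ^ q) x := by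
  rcases eq_or_ne x 0 with rfl | hx
  · rw [hasDerivAt_iff_isLittleO_nhds_zero]
    have h : Tendsto (fun y : ℝ => |y| ^ q) (𝓝 0) (𝓝 0) := by
      simpa [zero_rpow hq.ne'] using
        (continuous_abs.rpow_const fun _ => Or.inr hq.le).tendsto (0 : ℝ)
    simpa [zero_rpow hq.ne'] using
      ((isLittleO_one_iff ℝ).2 h).mul_isBigO (isBigO_refl (fun y : ℝ => y) _)
  · refine (((hasDerivAt_abs hx).rpow_const (p := q) (Or.inl (abs_ne_zero.2 hx))).mul
      (hasDerivAt_id x)).congr_deriv ?_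
    have : (SignType.sign x : ℝ) * x = |x| := by
      rcases hx.lt_or_gt with h | h <;> simp [h, abs_of_neg, abs_of_pos]
    have h : |x| ^ (q - 1) * |x| = |x| ^ q := by
      rw [← rpow_add_one (abs_ne_zero.2 hx), sub_add_cancel]
    simp only [id_eq, mul_one]
    linear_combination q * h + q * |x| ^ (q - 1) * this

theorem abs_sub_one_le_abs_rpow {p : ℝ} (hp : 1 ≤ p) (x : ℝ) : |x| - 1 ≤ |x| ^ p := by
  rcases le_total |x| 1 with hx | hx
  · linarith [rpow_nonneg (abs_nonneg x) p]
  · linarith [self_le_rpow_of_one_le hx hp]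

theorem summable_abs_add_one_rpow_mul_exp {r : ℝ} (hr : 0 < r) (c : ℝ) :
    Summable fun z : ℤ => (|(z : ℝ)| + 1) ^ c * exp (-r * |(z : ℝ)|) := by
  set k := ⌈c⌉₊
  have hshift : Summable fun n : ℕ => exp r * (((n + 1 : ℕ) : ℝ) ^ k * exp (-r * (n + 1 : ℕ))) :=
    ((summable_nat_add_iff 1).2 (summable_pow_mul_exp_neg_nat_mul k hr)).mul_left _
  have hnat : Summable fun n : ℕ => ((n : ℝ) + 1) ^ c * exp (-r * n) := by
    refine hshift.of_nonneg_of_le (fun n => by positivity) fun n => ?_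
    have hk : ((n : ℝ) + 1) ^ c ≤ ((n : ℝ) + 1) ^ k := by
      rw [← rpow_natCast]
      exact rpow_le_rpow_of_exponent_le (by linarith [n.cast_nonneg (α := ℝ)]) (Nat.le_ceil c)
    calc ((n : ℝ) + 1) ^ c * exp (-r * n)
        ≤ ((n : ℝ) + 1) ^ k * exp (-r * n) := by gcongr
      _ = exp r * (((n + 1 : ℕ) : ℝ) ^ k * exp (-r * (n + 1 : ℕ))) := by
        push_cast
        rw [mul_left_comm, ← exp_add]
        ring_nf
  exact .of_nat_of_neg (by simpa using hnat) (by simpa using hnat)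

theorem tsum_int_eq_zero_of_odd {g : ℤ → ℝ} (hg : ∀ z, g (-z) = -g z) : ∑' z, g z = 0 := by
  have h := (Equiv.neg ℤ).tsum_eq g
  simp only [Equiv.neg_apply, hg, tsum_neg] at h
  linarith

theorem hasDerivAt_tsum_int_sub {f f' : ℝ → ℝ} {u : ℤ → ℝ}
    (hf : ∀ x, HasDerivAt f (f' x) x) (hu : Summable u)
    (hf'u : ∀ (z : ℤ) (s : ℝ), |s| < 1 → ‖f' (z - s)‖ ≤ u z)
    (hf0 : Summable fun z : ℤ => f z) {s : ℝ} (hs : |s| < 1) :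
    HasDerivAt (fun s => ∑' z : ℤ, f (z - s)) (-∑' z : ℤ, f' (z - s)) s := by
  have hball : ∀ {s : ℝ}, s ∈ Metric.ball (0 : ℝ) 1 ↔ |s| < 1 := by
    simp [Real.norm_eq_abs]
  rw [← tsum_neg]
  refine hasDerivAt_tsum_of_isPreconnected (g := fun (z : ℤ) s => f (z - s))
    (g' := fun z s => -f' (z - s)) hu
    Metric.isOpen_ball (convex_ball _ _).isPreconnected (fun z s _ => ?_) (fun z s hs => ?_)
    (Metric.mem_ball_self one_pos) (by simpa using hf0) (hball.2 hs)
  · exact (hf (z - s)).comp_const_sub (z : ℝ) s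
  · simpa using hf'u z s (hball.1 hs)

noncomputable def genGaussian (p τ x : ℝ) : ℝ := exp (-τ * |x| ^ p)

noncomputable def genGaussianDeriv (p τ x : ℝ) : ℝ :=
  -(p * τ) * (|x| ^ (p - 2) * x) * genGaussian p τ x

noncomputable def genGaussianDeriv2 (p τ x : ℝ) : ℝ :=
  p * τ * (genGaussian p τ x * |x| ^ (p - 2) * (p * τ * |x| ^ p - (p - 1)))

section

variable {p τ : ℝ}

theorem hasDerivAt_genGaussian (hp : 1 < p) (x : ℝ) :
    HasDerivAt (genGaussian p τ) (genGaussianDeriv p τ x) x := by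
  refine (((hasDerivAt_abs_rpow x hp).const_mul (-τ)).exp).congr_deriv ?_
  rw [genGaussianDeriv, genGaussian]
  ring

theorem abs_rpow_sub_two_mul_self_sq {x : ℝ} (hp : 2 < p) :
    (|x| ^ (p - 2) * x) ^ 2 = |x| ^ (p - 2) * |x| ^ p := by
  rw [mul_pow, ← sq_abs x, ← rpow_natCast, ← rpow_natCast, ← rpow_mul (abs_nonneg x),
    ← rpow_add' (abs_nonneg x) (by push_cast; linarith),
    ← rpow_add' (abs_nonneg x) (by linarith)]
  congr 1
  push_cast
  ring

theorem hasDerivAt_genGaussianDeriv (hp : 2 < p) (x : ℝ) :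
    HasDerivAt (genGaussianDeriv p τ) (genGaussianDeriv2 p τ x) x := by
  refine (((hasDerivAt_abs_rpow_mul_self (by linarith : 0 < p - 2) x).const_mul (-(p * τ))).mul
    (hasDerivAt_genGaussian (by linarith) x)).congr_deriv ?_
  rw [genGaussianDeriv2, genGaussianDeriv]
  linear_combination (p * τ) ^ 2 * genGaussian p τ x * abs_rpow_sub_two_mul_self_sq hp

theorem norm_genGaussianDeriv (hp : 1 < p) (hτ : 0 ≤ τ) (x : ℝ) :
    ‖genGaussianDeriv p τ x‖ = p * τ * (|x| ^ (p - 1) * genGaussian p τ x) := by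
  have h : |x| ^ (p - 2) * |x| = |x| ^ (p - 1) := by
    rw [← rpow_add_one' (abs_nonneg x) (by linarith)]
    ring_nf
  rw [genGaussianDeriv, genGaussian, Real.norm_eq_abs, abs_mul, abs_mul, abs_neg, abs_mul,
    abs_mul, abs_exp, abs_of_nonneg (by positivity : 0 ≤ p), abs_of_nonneg hτ,
    abs_of_nonneg (rpow_nonneg (abs_nonneg x) _), ← h]
  ring

theorem norm_genGaussianDeriv2_le (hp : 2 < p) (hτ : 0 ≤ τ) (x : ℝ) :
    ‖genGaussianDeriv2 p τ x‖ ≤ p * τ * (p * τ * (|x| ^ (2 * p - 2) * genGaussian p τ x)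
      + (p - 1) * (|x| ^ (p - 2) * genGaussian p τ x)) := by
  have h : |x| ^ (p - 2) * |x| ^ p = |x| ^ (2 * p - 2) := by
    rw [← rpow_add' (abs_nonneg x) (by linarith)]
    ring_nf
  have hpτ : 0 ≤ p * τ := by positivity
  have hG : 0 ≤ genGaussian p τ x * |x| ^ (p - 2) := by unfold genGaussian; positivity
  have hsub : |p * τ * |x| ^ p - (p - 1)| ≤ p * τ * |x| ^ p + (p - 1) := by
    refine (abs_sub _ _).trans_eq ?_
    rw [abs_of_nonneg (by positivity : 0 ≤ p * τ * |x| ^ p),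
      abs_of_nonneg (by linarith : (0 : ℝ) ≤ p - 1)]
  calc ‖genGaussianDeriv2 p τ x‖
      = p * τ * (genGaussian p τ x * |x| ^ (p - 2) * |p * τ * |x| ^ p - (p - 1)|) := by
        rw [genGaussianDeriv2, Real.norm_eq_abs, abs_mul (p * τ), abs_of_nonneg hpτ,
          abs_mul (_ * _), abs_of_nonneg hG]
    _ ≤ p * τ * (genGaussian p τ x * |x| ^ (p - 2) * (p * τ * |x| ^ p + (p - 1))) := by
        gcongr
    _ = _ := by rw [← h]; ring

theorem abs_sub_rpow_mul_genGaussian_le {c : ℝ} (hp : 1 ≤ p) (hτ : 0 ≤ τ) (hc : 0 ≤ c)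
    (x : ℝ) {y : ℝ} (hy : |y| < 1) :
    |x - y| ^ c * genGaussian p τ (x - y) ≤ exp (2 * τ) * ((|x| + 1) ^ c * exp (-τ * |x|)) := by
  have hxy : |x - y| ≤ |x| + 1 := (abs_sub _ _).trans (by linarith)
  have hpow : |x - y| ^ c ≤ (|x| + 1) ^ c := rpow_le_rpow (abs_nonneg _) hxy hc
  -- `|x - y| ^ p ≥ |x - y| - 1 ≥ |x| - 2`
  have hexp : genGaussian p τ (x - y) ≤ exp (2 * τ) * exp (-τ * |x|) := by
    rw [genGaussian, ← exp_add, exp_le_exp]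
    have := abs_sub_one_le_abs_rpow hp (x - y)
    nlinarith [abs_sub_abs_le_abs_sub x y]
  calc |x - y| ^ c * genGaussian p τ (x - y)
      ≤ (|x| + 1) ^ c * (exp (2 * τ) * exp (-τ * |x|)) :=
        mul_le_mul hpow hexp (exp_pos _).le (by positivity)
    _ = exp (2 * τ) * ((|x| + 1) ^ c * exp (-τ * |x|)) := by ring

noncomputable def genGaussianMajorant (τ c : ℝ) (z : ℤ) : ℝ :=
  exp (2 * τ) * ((|(z : ℝ)| + 1) ^ c * exp (-τ * |(z : ℝ)|))

theorem summable_genGaussianMajorant (hτ : 0 < τ) (c : ℝ) : Summable (genGaussianMajorant τ c) :=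
  (summable_abs_add_one_rpow_mul_exp hτ c).mul_left _

theorem norm_genGaussianDeriv_int_sub_le (hp : 1 < p) (hτ : 0 ≤ τ) (z : ℤ) {s : ℝ}
    (hs : |s| < 1) :
    ‖genGaussianDeriv p τ (z - s)‖ ≤ p * τ * genGaussianMajorant τ (p - 1) z := by
  rw [norm_genGaussianDeriv hp hτ]
  gcongr
  exact abs_sub_rpow_mul_genGaussian_le hp.le hτ (by linarith) z hs

theorem norm_genGaussianDeriv2_int_sub_le (hp : 2 < p) (hτ : 0 ≤ τ) (z : ℤ) {s : ℝ}
    (hs : |s| < 1) :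
    ‖genGaussianDeriv2 p τ (z - s)‖ ≤ p * τ * (p * τ * genGaussianMajorant τ (2 * p - 2) z
      + (p - 1) * genGaussianMajorant τ (p - 2) z) := by
  refine (norm_genGaussianDeriv2_le hp hτ _).trans ?_
  gcongr
  · exact abs_sub_rpow_mul_genGaussian_le (by linarith) hτ (by linarith) z hs
  · linarith
  · exact abs_sub_rpow_mul_genGaussian_le (by linarith) hτ (by linarith) z hs

theorem summable_genGaussian_int (hp : 1 ≤ p) (hτ : 0 < τ) :
    Summable fun z : ℤ => genGaussian p τ z := by
  refine (summable_genGaussianMajorant hτ 0).of_nonneg_of_le (fun z => (exp_pos _).le)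
    fun z => ?_
  simpa [genGaussianMajorant] using
    abs_sub_rpow_mul_genGaussian_le hp hτ.le le_rfl (z : ℝ) (y := 0) (by simp)

theorem summable_genGaussianDeriv_int (hp : 1 < p) (hτ : 0 < τ) :
    Summable fun z : ℤ => genGaussianDeriv p τ z :=
  .of_norm_bounded ((summable_genGaussianMajorant hτ _).mul_left _) fun z => by
    simpa using norm_genGaussianDeriv_int_sub_le hp hτ.le z (s := 0) (by simp)

theorem summable_genGaussianDeriv2_int (hp : 2 < p) (hτ : 0 < τ) :
    Summable fun z : ℤ => genGaussianDeriv2 p τ z :=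
  .of_norm_bounded ((((summable_genGaussianMajorant hτ _).mul_left _).add
    ((summable_genGaussianMajorant hτ _).mul_left _)).mul_left _) fun z => by
    simpa using norm_genGaussianDeriv2_int_sub_le hp hτ.le z (s := 0) (by simp)

theorem hasDerivAt_theta1 (hp : 1 < p) (hτ : 0 < τ) {s : ℝ} (hs : |s| < 1) :
    HasDerivAt (Theta1 p τ) (-∑' z : ℤ, genGaussianDeriv p τ (z - s)) s :=
  hasDerivAt_tsum_int_sub (hasDerivAt_genGaussian hp)
    ((summable_genGaussianMajorant hτ _).mul_left _)
    (fun z _ hs => norm_genGaussianDeriv_int_sub_le hp hτ.le z hs)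
    (summable_genGaussian_int hp.le hτ) hs

theorem hasDerivAt_deriv_theta1 (hp : 2 < p) (hτ : 0 < τ) {s : ℝ} (hs : |s| < 1) :
    HasDerivAt (deriv (Theta1 p τ)) (∑' z : ℤ, genGaussianDeriv2 p τ (z - s)) s := by
  have hderiv : deriv (Theta1 p τ) =ᶠ[𝓝 s] fun t => -∑' z : ℤ, genGaussianDeriv p τ (z - t) := by
    filter_upwards [(isOpen_lt continuous_abs continuous_const).mem_nhds hs] with t ht
    exact (hasDerivAt_theta1 (by linarith) hτ ht).deriv
  have h := hasDerivAt_tsum_int_sub (hasDerivAt_genGaussianDeriv hp)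
    ((((summable_genGaussianMajorant hτ _).mul_left _).add
      ((summable_genGaussianMajorant hτ _).mul_left _)).mul_left _)
    (fun z _ hs => norm_genGaussianDeriv2_int_sub_le hp hτ.le z hs)
    (summable_genGaussianDeriv_int (by linarith) hτ) hs
  simpa using h.neg.congr_of_eventuallyEq hderiv

theorem tsum_genGaussianDeriv_int_eq_zero : ∑' z : ℤ, genGaussianDeriv p τ z = 0 :=
  tsum_int_eq_zero_of_odd fun z => by simp [genGaussianDeriv, genGaussian]

theorem tsum_genGaussianDeriv2_int :
    ∑' z : ℤ, genGaussianDeriv2 p τ z = thetaSecondDerivAtZero p τ := by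
  rw [thetaSecondDerivAtZero, ← tsum_mul_left]
  rfl

theorem thetaSecondDerivAtZero_pos (hp : 2 < p) (hτ : 0 < τ) (hτp : 1 - 1 / p ≤ τ) :
    0 < thetaSecondDerivAtZero p τ := by
  have hpτ : 0 < p * τ := by positivity
  have hp1 : p - 1 ≤ p * τ := by
    have := mul_le_mul_of_nonneg_left hτp (by linarith : 0 ≤ p)
    rwa [mul_sub, mul_one, mul_one_div_cancel (by linarith)] at this
  have hsum : Summable fun z : ℤ =>
      genGaussian p τ z * |(z : ℝ)| ^ (p - 2) * (p * τ * |(z : ℝ)| ^ p - (p - 1)) :=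
    (summable_mul_left_iff hpτ.ne').1 (summable_genGaussianDeriv2_int hp hτ)
  have hnonneg : ∀ z : ℤ,
      0 ≤ genGaussian p τ z * |(z : ℝ)| ^ (p - 2) * (p * τ * |(z : ℝ)| ^ p - (p - 1)) := by
    intro z
    rcases eq_or_ne z 0 with rfl | hz
    · simp [zero_rpow (by linarith : p - 2 ≠ 0)]
    · have hz1 : 1 ≤ |(z : ℝ)| ^ p :=
        one_le_rpow (by exact_mod_cast Int.one_le_abs hz) (by linarith)
      have : 0 ≤ genGaussian p τ z := (exp_pos _).le
      have : p - 1 ≤ p * τ * |(z : ℝ)| ^ p := by nlinarith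
      positivity
  have htwo : 0 < genGaussian p τ (2 : ℤ) * |((2 : ℤ) : ℝ)| ^ (p - 2) *
      (p * τ * |((2 : ℤ) : ℝ)| ^ p - (p - 1)) := by
    have h2 : (2 : ℝ) ≤ 2 ^ p := self_le_rpow_of_one_le one_le_two (by linarith)
    rw [Int.cast_two, abs_two]
    exact mul_pos (mul_pos (exp_pos _) (rpow_pos_of_pos two_pos _)) (by nlinarith)
  exact mul_pos hpτ (hsum.tsum_pos hnonneg 2 htwo)

end

/-- For any `p > 2` and `τ > 0`, the function `t ↦ Θ_p(τ; t)` is twice differentiable at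
`t = 0`, with first derivative `0` and second derivative
`p τ ∑_{z∈ℤ} exp(−τ|z|^p) |z|^{p−2} (p τ |z|^p − (p−1))`; in particular, if
`τ ≥ 1 − 1/p`, this second derivative is strictly positive. -/
theorem theta_hasDerivAt_zero (p τ : ℝ) (hp : 2 < p) (hτ : 0 < τ) :
    HasDerivAt (fun s => Theta1 p τ s) 0 0 ∧
    HasDerivAt (deriv (fun s => Theta1 p τ s)) (thetaSecondDerivAtZero p τ) 0 ∧
    (1 - 1 / p ≤ τ → 0 < thetaSecondDerivAtZero p τ) := by
  refine ⟨?_, ?_, thetaSecondDerivAtZero_pos hp hτ⟩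
  · simpa [tsum_genGaussianDeriv_int_eq_zero] using
      hasDerivAt_theta1 (by linarith) hτ (s := 0) (by simp)
  · simpa [tsum_genGaussianDeriv2_int] using hasDerivAt_deriv_theta1 hp hτ (s := 0) (by simp)
end
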